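/- For every real α ≥ 1 the coefficients κ₄ᵐ satisfy the recursive formulas: κ₄⁰ = b₀^α (1 + η b₀²); κ₄¹ = (b₁/b₀) [ α κ₄⁰ + 2η κ₂⁰(α+2) ]; and for every integer m ≥ 2, κ₄ᵐ = (1/(m b₀)) [ b₁(α−m+1) κ₄^{m−1} + b₂(2α−m+2) κ₄^{m−2} + 2η b₁ κ₂^{m−1}(α+2) + 4η b₂ κ₂^{m−2}(α+2) ]. -/

import Mathlib

open Finset

/-- `b₀ = (3α−2)/(2α)`. -/
noncomputable def b0 (α : ℝ) : ℝ := (3 * α - 2) / (2 * α)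

/-- `b₁ = −2(α−1)/α`. -/
noncomputable def b1 (α : ℝ) : ℝ := -(2 * (α - 1)) / α

/-- `b₂ = (α−2)/(2α)`. -/
noncomputable def b2 (α : ℝ) : ℝ := (α - 2) / (2 * α)

/-- `η = (3α−2)(α−2)(α−1)/(24α)`. -/
noncomputable def etaC (α : ℝ) : ℝ := (3 * α - 2) * (α - 2) * (α - 1) / (24 * α)

/-- Generalized binomial coefficient `C(β,k) = β(β−1)⋯(β−k+1)/k!`. -/
noncomputable def genBinom (β : ℝ) (k : ℕ) : ℝ :=
  (∏ i ∈ Finset.range k, (β - i)) / (Nat.factorial k)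

/-- `κ₂ⁿ(β) = (−1)ⁿ b₀^β Σ_{k=0}^{n} (b₂/b₀)^k C(β,k) C(β,n−k)`,
where `b₀, b₂` are formed from the fixed parameter `α`. -/
noncomputable def kappa2 (α β : ℝ) (n : ℕ) : ℝ :=
  (-1 : ℝ) ^ n * b0 α ^ β *
    ∑ k ∈ Finset.range (n + 1), (b2 α / b0 α) ^ k * genBinom β k * genBinom β (n - k)

/-- `κ₄ⁿ = κ₂ⁿ(α) + η κ₂ⁿ(α+2)`. -/
noncomputable def kappa4 (α : ℝ) (n : ℕ) : ℝ :=
  kappa2 α α n + etaC α * kappa2 α (α + 2) n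

lemma genBinom_succ (β : ℝ) (k : ℕ) :
    ((k : ℝ) + 1) * genBinom β (k + 1) = (β - k) * genBinom β k := by
  have h : (Nat.factorial k : ℝ) ≠ 0 := Nat.cast_ne_zero.mpr k.factorial_ne_zero
  have hk1 : ((k : ℝ) + 1) ≠ 0 := by positivity
  rw [genBinom, genBinom, Finset.prod_range_succ, Nat.factorial_succ]
  push_cast
  field_simp

noncomputable def Sfun (r β : ℝ) (n : ℕ) : ℝ :=
  ∑ k ∈ Finset.range (n + 1), r ^ k * genBinom β k * genBinom β (n - k)

lemma sumA (r β : ℝ) (n : ℕ) :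
    ∑ k ∈ Finset.range (n + 2), (k : ℝ) * (r ^ k * genBinom β k * genBinom β (n + 1 - k))
      = r * ∑ k ∈ Finset.range (n + 1), (β - k) * (r ^ k * genBinom β k * genBinom β (n - k)) := by
  rw [Finset.sum_range_succ']
  simp only [Nat.cast_zero, zero_mul, add_zero]
  rw [Finset.mul_sum]
  apply Finset.sum_congr rfl
  intro k hk
  have h2 : n + 1 - (k + 1) = n - k := by omega
  rw [h2]
  push_cast
  linear_combination r ^ k * r * genBinom β (n - k) * genBinom_succ β k

lemma sumB (r β : ℝ) (n : ℕ) :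
    ∑ k ∈ Finset.range (n + 2), ((n + 1 - k : ℕ) : ℝ) * (r ^ k * genBinom β k * genBinom β (n + 1 - k))
      = ∑ k ∈ Finset.range (n + 1), (β - ((n - k : ℕ) : ℝ)) * (r ^ k * genBinom β k * genBinom β (n - k)) := by
  rw [Finset.sum_range_succ]
  simp only [Nat.sub_self, Nat.cast_zero, zero_mul, add_zero]
  apply Finset.sum_congr rfl
  intro k hk
  simp only [Finset.mem_range] at hk
  have h1 : n + 1 - k = (n - k) + 1 := by omega
  rw [h1]
  push_cast
  linear_combination r ^ k * genBinom β k * genBinom_succ β (n - k)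

lemma Sfun_rec (r β : ℝ) (n : ℕ) :
    ((n : ℝ) + 2) * Sfun r β (n + 2)
      = (1 + r) * (β - ((n : ℝ) + 2) + 1) * Sfun r β (n + 1)
        + r * (2 * β - ((n : ℝ) + 2) + 2) * Sfun r β n := by
  have hA := sumA r β (n + 1)
  have hB := sumB r β (n + 1)
  have hA' := sumA r β n
  have hB' := sumB r β n
  simp only [show n + 1 + 2 = n + 3 from by omega, show n + 1 + 1 = n + 2 from by omega]
    at hA hB
  -- Step 1: (n+2) * S(n+2) as two sums, then shift
  have key1 : ((n : ℝ) + 2) * Sfun r β (n + 2)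
      = r * ∑ k ∈ Finset.range (n + 2), (β - k) * (r ^ k * genBinom β k * genBinom β (n + 1 - k))
        + ∑ k ∈ Finset.range (n + 2),
            (β - ((n + 1 - k : ℕ) : ℝ)) * (r ^ k * genBinom β k * genBinom β (n + 1 - k)) := by
    rw [← hA, ← hB, Sfun, show n + 2 + 1 = n + 3 from by omega, Finset.mul_sum,
      ← Finset.sum_add_distrib]
    apply Finset.sum_congr rfl
    intro k hk
    simp only [Finset.mem_range] at hk
    rw [Nat.cast_sub (by omega : k ≤ n + 2)]
    push_cast
    ring
  -- Step 2: per-term splitting of the coefficient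
  have E1 : r * ∑ k ∈ Finset.range (n + 2), (β - k) * (r ^ k * genBinom β k * genBinom β (n + 1 - k))
        + ∑ k ∈ Finset.range (n + 2),
            (β - ((n + 1 - k : ℕ) : ℝ)) * (r ^ k * genBinom β k * genBinom β (n + 1 - k))
      = (1 + r) * (β - ((n : ℝ) + 2) + 1) *
          ∑ k ∈ Finset.range (n + 2), r ^ k * genBinom β k * genBinom β (n + 1 - k)
        + (∑ k ∈ Finset.range (n + 2), (k : ℝ) * (r ^ k * genBinom β k * genBinom β (n + 1 - k))
          + r * ∑ k ∈ Finset.range (n + 2),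
              ((n + 1 - k : ℕ) : ℝ) * (r ^ k * genBinom β k * genBinom β (n + 1 - k))) := by
    rw [Finset.mul_sum, Finset.mul_sum, Finset.mul_sum, ← Finset.sum_add_distrib,
      ← Finset.sum_add_distrib, ← Finset.sum_add_distrib]
    apply Finset.sum_congr rfl
    intro k hk
    simp only [Finset.mem_range] at hk
    rw [Nat.cast_sub (by omega : k ≤ n + 1)]
    push_cast
    ring
  -- Step 3: the leftover sums collapse via the shifted identities
  have E2 : ∑ k ∈ Finset.range (n + 1), (β - k) * (r ^ k * genBinom β k * genBinom β (n - k))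
        + ∑ k ∈ Finset.range (n + 1),
            (β - ((n - k : ℕ) : ℝ)) * (r ^ k * genBinom β k * genBinom β (n - k))
      = (2 * β - (n : ℝ)) * ∑ k ∈ Finset.range (n + 1), r ^ k * genBinom β k * genBinom β (n - k) := by
    rw [Finset.mul_sum, ← Finset.sum_add_distrib]
    apply Finset.sum_congr rfl
    intro k hk
    simp only [Finset.mem_range] at hk
    rw [Nat.cast_sub (by omega : k ≤ n)]
    push_cast
    ring
  have hS1 : Sfun r β (n + 1)
      = ∑ k ∈ Finset.range (n + 2), r ^ k * genBinom β k * genBinom β (n + 1 - k) := by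
    rw [Sfun, show n + 1 + 1 = n + 2 from by omega]
  have hS0 : Sfun r β n
      = ∑ k ∈ Finset.range (n + 1), r ^ k * genBinom β k * genBinom β (n - k) := rfl
  rw [key1, E1, hA', hB', hS1, hS0]
  linear_combination r * E2

lemma kappa2_eq (α β : ℝ) (n : ℕ) :
    kappa2 α β n = (-1 : ℝ) ^ n * b0 α ^ β * Sfun (b2 α / b0 α) β n := rfl

lemma b0_pos (α : ℝ) (hα : 1 ≤ α) : 0 < b0 α := by
  unfold b0; apply div_pos <;> linarith

lemma kappa2_rec (α β : ℝ) (hα : 1 ≤ α) (n : ℕ) :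
    ((n : ℝ) + 2) * b0 α * kappa2 α β (n + 2)
      = b1 α * (β - ((n : ℝ) + 2) + 1) * kappa2 α β (n + 1)
        + b2 α * (2 * β - ((n : ℝ) + 2) + 2) * kappa2 α β n := by
  have hb0 : b0 α ≠ 0 := ne_of_gt (b0_pos α hα)
  have hαne : α ≠ 0 := by linarith
  have hr : b0 α * (b2 α / b0 α) = b2 α := mul_div_cancel₀ _ hb0
  have hb1 : b1 α = -(b0 α + b2 α) := by
    unfold b0 b1 b2; field_simp; ring
  have hS := Sfun_rec (b2 α / b0 α) β n
  rw [kappa2_eq, kappa2_eq, kappa2_eq]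
  have h2 : ((-1 : ℝ)) ^ (n + 2) = (-1 : ℝ) ^ n := by rw [pow_succ, pow_succ]; ring
  have h1 : ((-1 : ℝ)) ^ (n + 1) = -(-1 : ℝ) ^ n := by rw [pow_succ]; ring
  rw [h2, h1]
  set A : ℝ := (-1 : ℝ) ^ n * b0 α ^ β with hA
  set s2 := Sfun (b2 α / b0 α) β (n + 2)
  set s1 := Sfun (b2 α / b0 α) β (n + 1)
  set s0 := Sfun (b2 α / b0 α) β n
  linear_combination (b0 α ^ β * (-1:ℝ)^n * b0 α) * hS
    + ((β - ((n : ℝ) + 2) + 1) * A * s1 + (2 * β - ((n : ℝ) + 2) + 2) * A * s0) * hr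
    + ((β - ((n : ℝ) + 2) + 1) * A * s1) * hb1

/-- Initial values and recursive formulas for the coefficients `κ₄ᵐ`. -/
theorem kappa4_recurrence (α : ℝ) (hα : 1 ≤ α) :
    kappa4 α 0 = b0 α ^ α * (1 + etaC α * b0 α ^ (2 : ℕ)) ∧
    kappa4 α 1 = (b1 α / b0 α) * (α * kappa4 α 0 + 2 * etaC α * kappa2 α (α + 2) 0) ∧
    ∀ m : ℕ, 2 ≤ m →
      kappa4 α m = (1 / (m * b0 α)) *
        (b1 α * (α - m + 1) * kappa4 α (m - 1) + b2 α * (2 * α - m + 2) * kappa4 α (m - 2) +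
          2 * etaC α * b1 α * kappa2 α (α + 2) (m - 1) +
          4 * etaC α * b2 α * kappa2 α (α + 2) (m - 2)) := by
  have hb0pos := b0_pos α hα
  have hb0 : b0 α ≠ 0 := ne_of_gt hb0pos
  have hαne : α ≠ 0 := by linarith
  have hrpow : b0 α ^ (α + 2) = b0 α ^ α * b0 α ^ (2 : ℕ) := by
    rw [Real.rpow_add hb0pos, show ((2:ℝ)) = ((2:ℕ):ℝ) by norm_num, Real.rpow_natCast]
  have hk0 : ∀ β : ℝ, kappa2 α β 0 = b0 α ^ β := by
    intro β
    simp [kappa2, genBinom]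
  have hb1 : b1 α = -(b0 α + b2 α) := by
    unfold b0 b1 b2; field_simp; ring
  have hk1 : ∀ β : ℝ, kappa2 α β 1 = b0 α ^ β * β * (b1 α / b0 α) := by
    intro β
    have hgb0 : genBinom β 0 = 1 := by simp [genBinom]
    have hgb1 : genBinom β 1 = β := by simp [genBinom]
    rw [kappa2, Finset.sum_range_succ, Finset.sum_range_one]
    norm_num [hgb0, hgb1, hb1]
    field_simp
    ring
  refine ⟨?_, ?_, ?_⟩
  · rw [kappa4]; simp only [hk0]; rw [hrpow]; ring
  · rw [kappa4, kappa4]; simp only [hk1, hk0]; rw [hrpow]; ring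
  · intro m hm
    obtain ⟨n, rfl⟩ : ∃ n, m = n + 2 := ⟨m - 2, by omega⟩
    have h1 : n + 2 - 1 = n + 1 := by omega
    have h2 : n + 2 - 2 = n := by omega
    rw [h1, h2]
    have hne : ((n : ℝ) + 2) * b0 α ≠ 0 := by positivity
    have R1 := kappa2_rec α α hα n
    have R2 := kappa2_rec α (α + 2) hα n
    rw [kappa4, kappa4, kappa4]
    push_cast
    rw [one_div, inv_mul_eq_div, eq_comm, div_eq_iff hne]
    linear_combination (-1 : ℝ) * R1 + (-(etaC α)) * R2
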